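/- Assume in addition that ε·μ ≥ 2/3 (which holds for any admissible pair with μ ≠ 1 and Δ ≠ −3). Let an infinite run (N = ∞) of the continued fraction algorithm on input z ∈ ℂ be given. Then z is badly approximable over 𝒪 if and only if the sequence of coefficients (a_n)_{n≥1} is bounded, i.e., sup_{n≥1} |a_n| < ∞. -/

import Mathlib

noncomputable section

namespace CFNE

/-- τ = (Δ + i·√|Δ|)/2. -/
def tau (Δ : ℤ) : ℂ := ((Δ : ℂ) + Complex.I * (Real.sqrt |(Δ : ℝ)|)) / 2

/-- The imaginary quadratic order 𝒪 = ℤ[τ] of discriminant Δ, as a subring of ℂ. -/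
def O (Δ : ℤ) : Subring ℂ := Subring.closure {tau Δ}

/-- A (nonzero or zero) ideal of 𝒪, presented as a subset of ℂ. -/
structure IdealS (Δ : ℤ) where
  carrier : Set ℂ
  subset : carrier ⊆ (O Δ : Set ℂ)
  zero_mem : (0 : ℂ) ∈ carrier
  add_mem : ∀ x ∈ carrier, ∀ y ∈ carrier, x + y ∈ carrier
  neg_mem : ∀ x ∈ carrier, -x ∈ carrier
  smul_mem : ∀ r ∈ (O Δ : Set ℂ), ∀ x ∈ carrier, r * x ∈ carrier

/-- The ideal as an additive subgroup of ℂ. -/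
def IdealS.toAddSubgroup {Δ : ℤ} (I : IdealS Δ) : AddSubgroup ℂ where
  carrier := I.carrier
  zero_mem' := I.zero_mem
  add_mem' := fun hx hy => I.add_mem _ hx _ hy
  neg_mem' := fun hx => I.neg_mem _ hx

/-- The norm of an ideal: the index [𝒪 : 𝔟]. -/
def IdealS.norm {Δ : ℤ} (I : IdealS Δ) : ℕ :=
  I.toAddSubgroup.relIndex (O Δ).toAddSubgroup

/-- The ideal is nonzero. -/
def IdealS.Nonzero {Δ : ℤ} (I : IdealS Δ) : Prop := ∃ x ∈ I.carrier, x ≠ 0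

/-- Two nonzero ideals lie in the same class if x·𝔞 = y·𝔟 for some nonzero x, y ∈ 𝒪. -/
def SameClass {Δ : ℤ} (I J : IdealS Δ) : Prop :=
  ∃ x ∈ (O Δ : Set ℂ), ∃ y ∈ (O Δ : Set ℂ), x ≠ 0 ∧ y ≠ 0 ∧
    (fun t => x * t) '' I.carrier = (fun t => y * t) '' J.carrier

/-- A reduced ideal: a nonzero ideal of minimal norm in its ideal class. -/
def IsReduced {Δ : ℤ} (I : IdealS Δ) : Prop :=
  I.Nonzero ∧ ∀ J : IdealS Δ, J.Nonzero → SameClass I J → I.norm ≤ J.norm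

/-- The inverse fractional ideal 𝔟⁻¹ = {x ∈ ℂ : x·𝔟 ⊆ 𝒪}. -/
def invSet {Δ : ℤ} (I : IdealS Δ) : Set ℂ :=
  {x : ℂ | ∀ y ∈ I.carrier, x * y ∈ (O Δ : Set ℂ)}

/-- The fractional ideal a·𝔟 + b·𝔟⁻¹, as a subset of ℂ. -/
def combSet {Δ : ℤ} (I : IdealS Δ) (a b : ℂ) : Set ℂ :=
  {u : ℂ | ∃ s ∈ I.carrier, ∃ t ∈ invSet I, u = a * s + b * t}

/-- The ideal x·𝒪 + y·𝒪 of 𝒪 generated by x and y, as a subset of ℂ. -/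
def genSet (Δ : ℤ) (x y : ℂ) : Set ℂ :=
  {u : ℂ | ∃ s ∈ (O Δ : Set ℂ), ∃ t ∈ (O Δ : Set ℂ), u = x * s + y * t}

/-- The set is the carrier of a reduced ideal of 𝒪. -/
def IsReducedSet (Δ : ℤ) (S : Set ℂ) : Prop :=
  ∃ J : IdealS Δ, IsReduced J ∧ J.carrier = S

/-- B is admissible with ε ∈ (0,1): B is a nonempty finite subset of 𝒪 ∖ {0}, and for every
reduced ideal 𝔟 with 𝔟 ∩ B ≠ ∅, the discs D(a/b, ε/|b|) over b ∈ 𝔟 ∩ B, a ∈ 𝔟⁻¹ with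
a·𝔟 + b·𝔟⁻¹ reduced, cover ℂ. -/
def Admissible (Δ : ℤ) (B : Set ℂ) (ε : ℝ) : Prop :=
  B.Nonempty ∧ B.Finite ∧ B ⊆ (O Δ : Set ℂ) ∧ (0 : ℂ) ∉ B ∧
  ∀ I : IdealS Δ, IsReduced I → (I.carrier ∩ B).Nonempty →
    ∀ z : ℂ, ∃ b ∈ I.carrier ∩ B, ∃ a ∈ invSet I,
      IsReducedSet Δ (combSet I a b) ∧ ‖z - a / b‖ ≤ ε / ‖b‖

/-- μ = max{|b| : b ∈ B}. -/
def mu (B : Set ℂ) : ℝ := sSup ((fun x : ℂ => ‖x‖) '' B)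

/-- A run of the continued fraction algorithm of length N ∈ ℕ ∪ {∞} on input z. -/
structure Run (Δ : ℤ) (B : Set ℂ) (ε : ℝ) (z : ℂ) (N : ℕ∞) where
  a : ℤ → ℂ
  b : ℤ → ℂ
  p : ℤ → ℂ
  q : ℤ → ℂ
  zs : ℤ → ℂ
  b_zero : b 0 = 1
  p_neg_one : p (-1) = 0
  q_neg_one : q (-1) = 1
  p_zero : p 0 = 1
  q_zero : q 0 = 0
  zs_zero : zs 0 = z
  ha : ∀ n : ℕ, 1 ≤ n → (n : ℕ∞) ≤ N → a n ∈ O Δ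
  hb : ∀ n : ℕ, 1 ≤ n → (n : ℕ∞) ≤ N → b n ∈ B
  hne : ∀ n : ℕ, 1 ≤ n → (n : ℕ∞) ≤ N → b n * zs ((n : ℤ) - 1) - a n ≠ 0
  hclose : ∀ n : ℕ, 1 ≤ n → (n : ℕ∞) ≤ N →
    ‖b n * zs ((n : ℤ) - 1) - a n‖ ≤ ε * ‖b ((n : ℤ) - 1)‖
  hp : ∀ n : ℕ, 1 ≤ n → (n : ℕ∞) ≤ N →
    p n = (a n * p ((n : ℤ) - 1) + b n * p ((n : ℤ) - 2)) / b ((n : ℤ) - 1)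
  hq : ∀ n : ℕ, 1 ≤ n → (n : ℕ∞) ≤ N →
    q n = (a n * q ((n : ℤ) - 1) + b n * q ((n : ℤ) - 2)) / b ((n : ℤ) - 1)
  hz : ∀ n : ℕ, 1 ≤ n → (n : ℕ∞) ≤ N →
    zs n = b ((n : ℤ) - 1) / (b n * zs ((n : ℤ) - 1) - a n)
  hpO : ∀ n : ℕ, 1 ≤ n → (n : ℕ∞) ≤ N → p n ∈ O Δ
  hqO : ∀ n : ℕ, 1 ≤ n → (n : ℕ∞) ≤ N → q n ∈ O Δ
  hred : ∀ n : ℕ, 1 ≤ n → (n : ℕ∞) ≤ N → IsReducedSet Δ (genSet Δ (p n) (q n))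

/-- z is badly approximable over 𝒪. -/
def BadlyApproximable (Δ : ℤ) (z : ℂ) : Prop :=
  ∃ c : ℝ, 0 < c ∧ ∀ p q : ℂ, p ∈ O Δ → q ∈ O Δ → q ≠ 0 →
    c ≤ ‖q * (q * z - p)‖

/-!
Write θₙ = qₙz − pₙ. The recurrences give bₙθₙ₊₁ = −θₙ(bₙ₊₁zₙ − aₙ₊₁) and θₙ = −zₙ₊₁θₙ₊₁, so
|θₙ| ≤ εⁿ, and with the determinant identity pₙ₊₁qₙ − pₙqₙ₊₁ = ±bₙ₊₁ they give the uniform bound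
|qₙ₊₁θₙ| ≤ μ/(1 − ε²). Since aₙ₊₁ = bₙ₊₁zₙ − (bₙ₊₁zₙ − aₙ₊₁) with 1 ≤ |bₙ₊₁| ≤ μ, the aₙ are bounded
iff the zₙ are.

If z is badly approximable, |zₙ| = |qₙθₙ₋₁| / |qₙθₙ| ≤ μ/((1 − ε²)c). Conversely, if |zₙ| ≤ Z, take
p, q ∈ 𝒪 with q ≠ 0 and the index k with |qθₖ| ≥ 1/2 > |qθₖ₊₁|. Either qpₖ₊₁ − pqₖ₊₁ is a nonzero
element of 𝒪, hence of absolute value at least 1, which forces |q(qz − p)| to be large; or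
p/q = pₖ₊₁/qₖ₊₁, and then |θₖ| ≤ Z|θₖ₊₁| bounds |q(qz − p)| from below. Nonzero elements of 𝒪 have
absolute value at least 1 because their squared absolute value is a positive integer.
-/

lemma tau_mul_self {Δ k : ℤ} (hΔ : Δ < 0) (hk : Δ ^ 2 - Δ = 4 * k) :
    tau Δ * tau Δ = Δ * tau Δ - k := by
  have hsqrt : ((√|(Δ : ℝ)| : ℝ) : ℂ) * (√|(Δ : ℝ)| : ℝ) = -Δ := by
    rw [← Complex.ofReal_mul, Real.mul_self_sqrt (abs_nonneg _),
      abs_of_neg (by exact_mod_cast hΔ)]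
    push_cast
    ring
  have hkC : (Δ : ℂ) ^ 2 - Δ = 4 * k := by exact_mod_cast hk
  simp only [tau]
  linear_combination ((√|(Δ : ℝ)| : ℝ) : ℂ) * (√|(Δ : ℝ)| : ℝ) / 4 * Complex.I_mul_I
    - hsqrt / 4 - hkC / 4

lemma exists_eq_intCast_add_intCast_mul {A : Type*} [CommRing A] {ω : A} {s t : ℤ}
    (hω : ω * ω = s * ω - t) {x : A} (hx : x ∈ Subring.closure {ω}) :
    ∃ m n : ℤ, x = m + n * ω := by
  induction hx using Subring.closure_induction with
  | mem w hw => exact ⟨0, 1, by rw [Set.mem_singleton_iff.mp hw]; push_cast; ring⟩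
  | one => exact ⟨1, 0, by push_cast; ring⟩
  | zero => exact ⟨0, 0, by push_cast; ring⟩
  | add _ _ _ _ hx hy =>
    obtain ⟨m, n, rfl⟩ := hx
    obtain ⟨m', n', rfl⟩ := hy
    exact ⟨m + m', n + n', by push_cast; ring⟩
  | neg _ _ hx =>
    obtain ⟨m, n, rfl⟩ := hx
    exact ⟨-m, -n, by push_cast; ring⟩
  | mul _ _ _ _ hx hy =>
    obtain ⟨m, n, rfl⟩ := hx
    obtain ⟨m', n', rfl⟩ := hy
    exact ⟨m * m' - n * n' * t, m * n' + n * m' + n * n' * s, by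
      push_cast; linear_combination (n : A) * n' * hω⟩

lemma exists_normSq_eq_intCast_of_mem_O {Δ : ℤ} (hΔ : Δ < 0) (hΔmod : Δ % 4 = 0 ∨ Δ % 4 = 1)
    {x : ℂ} (hx : x ∈ O Δ) : ∃ N : ℤ, Complex.normSq x = N := by
  obtain ⟨k, hk⟩ : ∃ k : ℤ, Δ ^ 2 - Δ = 4 * k := by
    rcases hΔmod with h | h
    · obtain ⟨m, rfl⟩ : ∃ m, Δ = 4 * m := ⟨Δ / 4, by omega⟩
      exact ⟨4 * m ^ 2 - m, by ring⟩
    · obtain ⟨m, rfl⟩ : ∃ m, Δ = 4 * m + 1 := ⟨Δ / 4, by omega⟩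
      exact ⟨4 * m ^ 2 + m, by ring⟩
  have hτ := tau_mul_self hΔ hk
  obtain ⟨m, n, rfl⟩ := exists_eq_intCast_add_intCast_mul hτ hx
  have hconj : starRingEnd ℂ (tau Δ) = Δ - tau Δ := by
    simp only [tau, map_div₀, map_add, map_mul, Complex.conj_I, map_intCast, map_ofNat,
      Complex.conj_ofReal]
    ring
  refine ⟨m ^ 2 + m * n * Δ + n ^ 2 * k, Complex.ofReal_injective ?_⟩
  rw [← Complex.mul_conj, map_add, map_mul, hconj, map_intCast, map_intCast]
  push_cast
  linear_combination -(n : ℂ) ^ 2 * hτ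

lemma one_le_norm_of_mem_O {Δ : ℤ} (hΔ : Δ < 0) (hΔmod : Δ % 4 = 0 ∨ Δ % 4 = 1)
    {x : ℂ} (hx : x ∈ O Δ) (hx0 : x ≠ 0) : 1 ≤ ‖x‖ := by
  obtain ⟨N, hN⟩ := exists_normSq_eq_intCast_of_mem_O hΔ hΔmod hx
  have hN0 : (0 : ℝ) < N := hN ▸ Complex.normSq_pos.2 hx0
  have hN1 : (1 : ℝ) ≤ N := by exact_mod_cast (show (0 : ℤ) < N by exact_mod_cast hN0)
  have hsq : 1 ≤ ‖x‖ ^ 2 := by rw [Complex.sq_norm, hN]; exact hN1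
  nlinarith [norm_nonneg x]

lemma exists_le_and_succ_lt {α : Type*} [LinearOrder α] {u : ℕ → α} {r : α} (h0 : r ≤ u 0)
    (h : ∃ n, u n < r) : ∃ k, r ≤ u k ∧ u (k + 1) < r := by
  by_contra! hu
  obtain ⟨n, hn⟩ := h
  have hall : ∀ m, r ≤ u m := fun m => Nat.rec h0 hu m
  exact (hall n).not_gt hn

lemma inv_le_of_one_le_mul {K : Type*} [Field K] [LinearOrder K] [IsStrictOrderedRing K]
    {a b : K} (hb : 0 ≤ b) (h : 1 ≤ a * b) : a⁻¹ ≤ b := by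
  have ha : 0 < a := by
    by_contra! ha
    linarith [mul_nonpos_of_nonpos_of_nonneg ha hb]
  rwa [inv_le_iff_one_le_mul₀' ha]

namespace Run

variable {Δ : ℤ} {B : Set ℂ} {ε : ℝ} {z : ℂ} (R : Run Δ B ε z ⊤)

/- The run's sequences at natural indices, so that `R.an (n + 1)` is the instance at `n + 1` of a
statement about `R.an n`; `R.a (n + 1)` would elaborate to `R.a (↑n + 1)` instead. -/
def an (n : ℕ) : ℂ := R.a n
def bn (n : ℕ) : ℂ := R.b n
def zn (n : ℕ) : ℂ := R.zs n
def pn (n : ℕ) : ℂ := R.p n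
def qn (n : ℕ) : ℂ := R.q n

def θ (n : ℕ) : ℂ := R.qn n * z - R.pn n

def δ (n : ℕ) : ℂ := R.bn (n + 1) * R.zn n - R.an (n + 1)

lemma bn_zero : R.bn 0 = 1 := R.b_zero
lemma zn_zero : R.zn 0 = z := R.zs_zero
lemma pn_zero : R.pn 0 = 1 := R.p_zero
lemma qn_zero : R.qn 0 = 0 := R.q_zero

lemma θ_zero : R.θ 0 = -1 := by simp [θ, pn_zero, qn_zero]

lemma bn_succ_mem (n : ℕ) : R.bn (n + 1) ∈ B := R.hb (n + 1) n.succ_pos le_top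

lemma pn_mem (n : ℕ) : R.pn n ∈ O Δ := by
  cases n with
  | zero => rw [pn_zero]; exact one_mem _
  | succ n => exact R.hpO (n + 1) n.succ_pos le_top

lemma qn_mem (n : ℕ) : R.qn n ∈ O Δ := by
  cases n with
  | zero => rw [qn_zero]; exact zero_mem _
  | succ n => exact R.hqO (n + 1) n.succ_pos le_top

lemma bn_ne_zero (hB0 : (0 : ℂ) ∉ B) (n : ℕ) : R.bn n ≠ 0 := by
  cases n with
  | zero => rw [bn_zero]; exact one_ne_zero
  | succ n => exact fun h => hB0 (h ▸ R.bn_succ_mem n)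

lemma one_le_norm_bn (hΔ : Δ < 0) (hΔmod : Δ % 4 = 0 ∨ Δ % 4 = 1) (hBO : B ⊆ O Δ)
    (hB0 : (0 : ℂ) ∉ B) (n : ℕ) : 1 ≤ ‖R.bn n‖ := by
  cases n with
  | zero => rw [bn_zero, norm_one]
  | succ n => exact one_le_norm_of_mem_O hΔ hΔmod (hBO (R.bn_succ_mem n)) (R.bn_ne_zero hB0 _)

lemma norm_bn_le_mu (hB : B.Finite) (hb1 : ∀ n, 1 ≤ ‖R.bn n‖) (n : ℕ) : ‖R.bn n‖ ≤ mu B := by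
  have hle : ∀ n, ‖R.bn (n + 1)‖ ≤ mu B := fun n =>
    le_csSup (hB.image _).bddAbove ⟨_, R.bn_succ_mem n, rfl⟩
  cases n with
  | zero => rw [bn_zero, norm_one]; exact (hb1 1).trans (hle 0)
  | succ n => exact hle n

lemma δ_ne_zero (n : ℕ) : R.δ n ≠ 0 := by
  simpa [δ, an, bn, zn] using R.hne (n + 1) n.succ_pos le_top

lemma norm_δ_le (n : ℕ) : ‖R.δ n‖ ≤ ε * ‖R.bn n‖ := by
  simpa [δ, an, bn, zn] using R.hclose (n + 1) n.succ_pos le_top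

lemma zn_succ_mul_δ (n : ℕ) : R.zn (n + 1) * R.δ n = R.bn n := by
  have h := R.hz (n + 1) n.succ_pos le_top
  simp only [Nat.cast_add, Nat.cast_one, add_sub_cancel_right] at h
  rw [zn, Nat.cast_add, Nat.cast_one, h]
  exact div_mul_cancel₀ _ (R.δ_ne_zero n)

lemma pn_one : R.pn 1 = R.an 1 := by
  simpa [pn, an, R.p_zero, R.p_neg_one, R.b_zero] using R.hp 1 le_rfl le_top

lemma qn_one : R.qn 1 = R.bn 1 := by
  simpa [qn, bn, R.q_zero, R.q_neg_one, R.b_zero] using R.hq 1 le_rfl le_top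

lemma zn_succ_ne_zero (hB0 : (0 : ℂ) ∉ B) (n : ℕ) : R.zn (n + 1) ≠ 0 :=
  left_ne_zero_of_mul ((R.zn_succ_mul_δ n).trans_ne (R.bn_ne_zero hB0 n))

lemma pn_rec (hB0 : (0 : ℂ) ∉ B) (n : ℕ) :
    R.pn (n + 2) * R.bn (n + 1) = R.an (n + 2) * R.pn (n + 1) + R.bn (n + 2) * R.pn n := by
  have h := R.hp (n + 2) (by omega) le_top
  rw [show ((n + 2 : ℕ) : ℤ) - 1 = (n + 1 : ℕ) by omega,
    show ((n + 2 : ℕ) : ℤ) - 2 = n by omega] at h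
  rw [pn, h]
  exact div_mul_cancel₀ _ (R.bn_ne_zero hB0 (n + 1))

lemma qn_rec (hB0 : (0 : ℂ) ∉ B) (n : ℕ) :
    R.qn (n + 2) * R.bn (n + 1) = R.an (n + 2) * R.qn (n + 1) + R.bn (n + 2) * R.qn n := by
  have h := R.hq (n + 2) (by omega) le_top
  rw [show ((n + 2 : ℕ) : ℤ) - 1 = (n + 1 : ℕ) by omega,
    show ((n + 2 : ℕ) : ℤ) - 2 = n by omega] at h
  rw [qn, h]
  exact div_mul_cancel₀ _ (R.bn_ne_zero hB0 (n + 1))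

lemma θ_rec (hB0 : (0 : ℂ) ∉ B) (n : ℕ) :
    R.θ (n + 2) * R.bn (n + 1) = R.an (n + 2) * R.θ (n + 1) + R.bn (n + 2) * R.θ n := by
  simp only [θ]
  linear_combination z * R.qn_rec hB0 n - R.pn_rec hB0 n

lemma pn_succ_mul_qn_sub (hB0 : (0 : ℂ) ∉ B) (n : ℕ) :
    R.pn (n + 1) * R.qn n - R.pn n * R.qn (n + 1) = (-1) ^ (n + 1) * R.bn (n + 1) := by
  induction n with
  | zero => simp [pn_zero, qn_zero, qn_one]
  | succ n ih =>
    refine mul_right_cancel₀ (R.bn_ne_zero hB0 (n + 1)) ?_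
    linear_combination R.qn (n + 1) * R.pn_rec hB0 n - R.pn (n + 1) * R.qn_rec hB0 n
      - R.bn (n + 2) * ih

lemma qn_succ_mul_θ_sub (hB0 : (0 : ℂ) ∉ B) (n : ℕ) :
    R.qn (n + 1) * R.θ n - R.qn n * R.θ (n + 1) = (-1) ^ (n + 1) * R.bn (n + 1) := by
  simp only [θ]
  linear_combination R.pn_succ_mul_qn_sub hB0 n

lemma θ_eq_neg_zn_mul_of_bn_mul {n : ℕ} (h : R.bn n * R.θ (n + 1) = -R.δ n * R.θ n) :
    R.θ n = -R.zn (n + 1) * R.θ (n + 1) := by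
  refine mul_left_cancel₀ (R.δ_ne_zero n) ?_
  linear_combination h + R.θ (n + 1) * R.zn_succ_mul_δ n

lemma bn_mul_θ_succ (hB0 : (0 : ℂ) ∉ B) (n : ℕ) : R.bn n * R.θ (n + 1) = -R.δ n * R.θ n := by
  induction n with
  | zero =>
    simp only [zero_add, θ, δ, bn_zero, pn_zero, qn_zero, pn_one, qn_one, zn_zero]
    ring
  | succ n ih =>
    rw [δ]
    linear_combination R.θ_rec hB0 n
      + R.bn (n + 2) * R.θ_eq_neg_zn_mul_of_bn_mul ih

lemma θ_eq_neg_zn_mul (hB0 : (0 : ℂ) ∉ B) (n : ℕ) : R.θ n = -R.zn (n + 1) * R.θ (n + 1) :=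
  R.θ_eq_neg_zn_mul_of_bn_mul (R.bn_mul_θ_succ hB0 n)

lemma θ_ne_zero (hB0 : (0 : ℂ) ∉ B) (n : ℕ) : R.θ n ≠ 0 := by
  induction n with
  | zero => simp [θ_zero]
  | succ n ih => exact fun h => ih (by rw [R.θ_eq_neg_zn_mul hB0 n, h, mul_zero])

lemma norm_θ_succ_le (hB0 : (0 : ℂ) ∉ B) (n : ℕ) :
    ‖R.θ (n + 1)‖ ≤ ε * ‖R.θ n‖ := by
  have hb : 0 < ‖R.bn n‖ := norm_pos_iff.2 (R.bn_ne_zero hB0 n)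
  refine le_of_mul_le_mul_left ?_ hb
  calc ‖R.bn n‖ * ‖R.θ (n + 1)‖ = ‖R.δ n‖ * ‖R.θ n‖ := by
        rw [← norm_mul, R.bn_mul_θ_succ hB0, norm_mul, norm_neg]
    _ ≤ ε * ‖R.bn n‖ * ‖R.θ n‖ := by gcongr; exact R.norm_δ_le n
    _ = ‖R.bn n‖ * (ε * ‖R.θ n‖) := by ring

lemma norm_θ_le_pow (hB0 : (0 : ℂ) ∉ B) (hε : 0 ≤ ε) (n : ℕ) : ‖R.θ n‖ ≤ ε ^ n := by
  induction n with
  | zero => simp [θ_zero]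
  | succ n ih =>
    calc ‖R.θ (n + 1)‖ ≤ ε * ‖R.θ n‖ := R.norm_θ_succ_le hB0 n
      _ ≤ ε * ε ^ n := by gcongr
      _ = ε ^ (n + 1) := by ring

lemma exists_norm_mul_θ_lt (hB0 : (0 : ℂ) ∉ B) (hε0 : 0 ≤ ε) (hε1 : ε < 1) (w : ℂ) {r : ℝ}
    (hr : 0 < r) : ∃ n, ‖w * R.θ n‖ < r := by
  obtain ⟨n, hn⟩ := exists_pow_lt_of_lt_one (show 0 < r / (‖w‖ + 1) by positivity) hε1
  refine ⟨n, ?_⟩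
  calc ‖w * R.θ n‖ ≤ ‖w‖ * ε ^ n := by
        rw [norm_mul]; gcongr; exact R.norm_θ_le_pow hB0 hε0 n
    _ ≤ (‖w‖ + 1) * ε ^ n := by gcongr; linarith
    _ < (‖w‖ + 1) * (r / (‖w‖ + 1)) := by gcongr
    _ = r := by field_simp

lemma qn_succ_ne_zero (hΔ : Δ < 0) (hΔmod : Δ % 4 = 0 ∨ Δ % 4 = 1) (hB0 : (0 : ℂ) ∉ B)
    (hε0 : 0 ≤ ε) (hε1 : ε < 1) (n : ℕ) : R.qn (n + 1) ≠ 0 := by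
  intro hq
  have hθ : R.θ (n + 1) = -R.pn (n + 1) := by simp [θ, hq]
  have hp : R.pn (n + 1) ≠ 0 := fun hp => R.θ_ne_zero hB0 (n + 1) (by rw [hθ, hp, neg_zero])
  have h1 := one_le_norm_of_mem_O hΔ hΔmod (R.pn_mem (n + 1)) hp
  have h2 := R.norm_θ_le_pow hB0 hε0 (n + 1)
  rw [hθ, norm_neg] at h2
  linarith [(pow_lt_one₀ hε0 hε1 n.succ_ne_zero : ε ^ (n + 1) < 1)]

lemma norm_qn_succ_mul_θ_le (hB0 : (0 : ℂ) ∉ B) {M : ℝ} (hbM : ∀ n, ‖R.bn n‖ ≤ M)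
    (hε0 : 0 ≤ ε) (hε1 : ε < 1) (n : ℕ) : ‖R.qn (n + 1) * R.θ n‖ ≤ M / (1 - ε ^ 2) := by
  have hε2 : 0 < 1 - ε ^ 2 := by nlinarith
  have hM : M ≤ M / (1 - ε ^ 2) := by
    rw [le_div_iff₀ hε2]
    nlinarith [(norm_nonneg _).trans (hbM 0)]
  have hbM' : ∀ n, ‖(-1 : ℂ) ^ (n + 1) * R.bn (n + 1)‖ ≤ M := fun n => by simpa using hbM (n + 1)
  induction n with
  | zero => simpa [qn_one, θ_zero] using (hbM 1).trans hM
  | succ n ih =>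
    have hnext : ‖R.qn (n + 1) * R.θ (n + 2)‖ ≤ ε ^ 2 * ‖R.qn (n + 1) * R.θ n‖ := by
      simp only [norm_mul]
      have h1 := R.norm_θ_succ_le hB0 n
      have h2 := R.norm_θ_succ_le hB0 (n + 1)
      calc ‖R.qn (n + 1)‖ * ‖R.θ (n + 2)‖ ≤ ‖R.qn (n + 1)‖ * (ε * (ε * ‖R.θ n‖)) := by
            gcongr; exact h2.trans (mul_le_mul_of_nonneg_left h1 hε0)
        _ = ε ^ 2 * (‖R.qn (n + 1)‖ * ‖R.θ n‖) := by ring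
    calc ‖R.qn (n + 2) * R.θ (n + 1)‖
        = ‖(-1) ^ (n + 2) * R.bn (n + 2) + R.qn (n + 1) * R.θ (n + 2)‖ := by
          rw [← R.qn_succ_mul_θ_sub hB0 (n + 1), sub_add_cancel]
      _ ≤ M + ε ^ 2 * (M / (1 - ε ^ 2)) := by
          refine (norm_add_le _ _).trans (add_le_add (hbM' (n + 1)) (hnext.trans ?_))
          gcongr
      _ = M / (1 - ε ^ 2) := by field_simp; ring

lemma exists_norm_an_le_iff {M : ℝ} (hb1 : ∀ n, 1 ≤ ‖R.bn n‖) (hbM : ∀ n, ‖R.bn n‖ ≤ M)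
    (hε0 : 0 ≤ ε) :
    (∃ C : ℝ, ∀ n : ℕ, 1 ≤ n → ‖R.an n‖ ≤ C) ↔ ∃ Z : ℝ, ∀ n, ‖R.zn n‖ ≤ Z := by
  have hδ : ∀ n, ‖R.δ n‖ ≤ ε * M := fun n => (R.norm_δ_le n).trans (by gcongr; exact hbM n)
  constructor
  · rintro ⟨C, hC⟩
    refine ⟨C + ε * M, fun n => ?_⟩
    calc ‖R.zn n‖ ≤ ‖R.bn (n + 1)‖ * ‖R.zn n‖ := le_mul_of_one_le_left (norm_nonneg _) (hb1 _)
      _ = ‖R.an (n + 1) + R.δ n‖ := by rw [δ, add_sub_cancel, norm_mul]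
      _ ≤ C + ε * M := (norm_add_le _ _).trans (add_le_add (hC _ (Nat.le_add_left 1 n)) (hδ n))
  · rintro ⟨Z, hZ⟩
    refine ⟨M * Z + ε * M, fun n hn => ?_⟩
    obtain ⟨n, rfl⟩ := Nat.exists_eq_add_of_le' hn
    calc ‖R.an (n + 1)‖ = ‖R.bn (n + 1) * R.zn n - R.δ n‖ := by rw [δ, sub_sub_cancel]
      _ ≤ M * Z + ε * M := by
        refine (norm_sub_le _ _).trans (add_le_add ?_ (hδ n))
        rw [norm_mul]
        exact mul_le_mul (hbM _) (hZ n) (norm_nonneg _) ((norm_nonneg _).trans (hbM 0))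

lemma exists_norm_zn_le_of_badlyApproximable (hΔ : Δ < 0) (hΔmod : Δ % 4 = 0 ∨ Δ % 4 = 1)
    (hB0 : (0 : ℂ) ∉ B) {M : ℝ} (hbM : ∀ n, ‖R.bn n‖ ≤ M) (hε0 : 0 ≤ ε) (hε1 : ε < 1)
    (hz : BadlyApproximable Δ z) : ∃ Z : ℝ, ∀ n, ‖R.zn n‖ ≤ Z := by
  obtain ⟨c, hc, hbad⟩ := hz
  set V := M / (1 - ε ^ 2)
  have hV : 0 ≤ V := (norm_nonneg _).trans (R.norm_qn_succ_mul_θ_le hB0 hbM hε0 hε1 0)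
  refine ⟨‖z‖ + V / c, fun n => ?_⟩
  cases n with
  | zero => rw [zn_zero]; linarith [div_nonneg hV hc.le]
  | succ n =>
    have hgood : c ≤ ‖R.qn (n + 1) * R.θ (n + 1)‖ :=
      hbad _ _ (R.pn_mem _) (R.qn_mem _) (R.qn_succ_ne_zero hΔ hΔmod hB0 hε0 hε1 n)
    have hzn : ‖R.zn (n + 1)‖ * c ≤ V :=
      calc ‖R.zn (n + 1)‖ * c ≤ ‖R.zn (n + 1)‖ * ‖R.qn (n + 1) * R.θ (n + 1)‖ := by gcongr
        _ = ‖R.qn (n + 1) * R.θ n‖ := by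
          rw [R.θ_eq_neg_zn_mul hB0 n]
          simp only [neg_mul, norm_neg, norm_mul]
          ring
        _ ≤ V := R.norm_qn_succ_mul_θ_le hB0 hbM hε0 hε1 n
    linarith [norm_nonneg z, (le_div_iff₀ hc).2 hzn]

lemma inv_le_norm_of_ne_convergent (hΔ : Δ < 0) (hΔmod : Δ % 4 = 0 ∨ Δ % 4 = 1) {p q : ℂ}
    (hp : p ∈ O Δ) (hq : q ∈ O Δ) {k : ℕ} {V : ℝ} (hV : ‖R.qn (k + 1) * R.θ k‖ ≤ V)
    (hk : 1 / 2 ≤ ‖q * R.θ k‖) (hk' : ‖q * R.θ (k + 1)‖ < 1 / 2)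
    (hne : q * R.pn (k + 1) ≠ p * R.qn (k + 1)) : (4 * V)⁻¹ ≤ ‖q * (q * z - p)‖ := by
  have hdist : 1 ≤ ‖q * R.pn (k + 1) - p * R.qn (k + 1)‖ :=
    one_le_norm_of_mem_O hΔ hΔmod
      (sub_mem (mul_mem hq (R.pn_mem _)) (mul_mem hp (R.qn_mem _))) (sub_ne_zero.2 hne)
  have hsplit : q * R.pn (k + 1) - p * R.qn (k + 1)
      = R.qn (k + 1) * (q * z - p) - q * R.θ (k + 1) := by
    simp only [θ]; ring
  have h1 : 1 / 2 ≤ ‖R.qn (k + 1)‖ * ‖q * z - p‖ := by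
    rw [hsplit] at hdist
    linarith [norm_sub_le (R.qn (k + 1) * (q * z - p)) (q * R.θ (k + 1)),
      norm_mul (R.qn (k + 1)) (q * z - p)]
  have h2 : ‖R.qn (k + 1)‖ ≤ 2 * V * ‖q‖ := by
    rw [norm_mul] at hV hk
    nlinarith [norm_nonneg (R.qn (k + 1)), norm_nonneg q]
  refine inv_le_of_one_le_mul (norm_nonneg _) ?_
  calc 1 ≤ 2 * (‖R.qn (k + 1)‖ * ‖q * z - p‖) := by linarith
    _ ≤ 2 * (2 * V * ‖q‖ * ‖q * z - p‖) := by gcongr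
    _ = 4 * V * ‖q * (q * z - p)‖ := by rw [norm_mul]; ring

lemma inv_le_norm_of_eq_convergent (hΔ : Δ < 0) (hΔmod : Δ % 4 = 0 ∨ Δ % 4 = 1)
    (hB0 : (0 : ℂ) ∉ B) {p q : ℂ} (hp : p ∈ O Δ) (hq : q ∈ O Δ) (hq0 : q ≠ 0) {k : ℕ} {M Z : ℝ}
    (hM : ‖R.bn (k + 1)‖ ≤ M) (hZ : ‖R.zn (k + 1)‖ ≤ Z) (hk : 1 / 2 ≤ ‖q * R.θ k‖)
    (heq : q * R.pn (k + 1) = p * R.qn (k + 1)) : (2 * M * Z)⁻¹ ≤ ‖q * (q * z - p)‖ := by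
  have hcross : (p * R.qn k - q * R.pn k) * R.qn (k + 1) = q * ((-1) ^ (k + 1) * R.bn (k + 1)) := by
    linear_combination R.qn k * heq.symm + q * R.pn_succ_mul_qn_sub hB0 k
  have hX : 1 ≤ ‖p * R.qn k - q * R.pn k‖ := by
    refine one_le_norm_of_mem_O hΔ hΔmod
      (sub_mem (mul_mem hp (R.qn_mem _)) (mul_mem hq (R.pn_mem _))) fun h0 => ?_
    rw [h0, zero_mul] at hcross
    exact mul_ne_zero hq0 (mul_ne_zero (pow_ne_zero _ (neg_ne_zero.2 one_ne_zero))
      (R.bn_ne_zero hB0 _)) hcross.symm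
  have hqk : ‖R.qn (k + 1)‖ ≤ ‖q‖ * M := by
    have hnorm := congrArg norm hcross
    simp only [norm_mul, norm_pow, norm_neg, norm_one, one_pow, one_mul] at hnorm
    nlinarith [norm_nonneg (R.qn (k + 1)), norm_nonneg q]
  have hval : ‖q * (q * z - p)‖ * ‖R.qn (k + 1)‖ = ‖q‖ ^ 2 * ‖R.θ (k + 1)‖ := by
    rw [← norm_mul, ← norm_pow, ← norm_mul]
    congr 1
    simp only [θ]
    linear_combination q * heq
  have hθ : ‖R.θ k‖ ≤ Z * ‖R.θ (k + 1)‖ := by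
    rw [R.θ_eq_neg_zn_mul hB0 k, neg_mul, norm_neg, norm_mul]
    gcongr
  have hqpos : 0 < ‖q‖ := norm_pos_iff.2 hq0
  have hZ0 : 0 ≤ Z := (norm_nonneg _).trans hZ
  rw [norm_mul] at hk
  refine inv_le_of_one_le_mul (norm_nonneg _) (le_of_mul_le_mul_left ?_ hqpos)
  calc ‖q‖ * 1 ≤ ‖q‖ * (2 * (‖q‖ * ‖R.θ k‖)) := by gcongr; linarith
    _ ≤ 2 * Z * (‖q‖ ^ 2 * ‖R.θ (k + 1)‖) := by
      nlinarith [mul_le_mul_of_nonneg_left hθ (sq_nonneg ‖q‖)]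
    _ = 2 * Z * ‖q * (q * z - p)‖ * ‖R.qn (k + 1)‖ := by rw [← hval]; ring
    _ ≤ 2 * Z * ‖q * (q * z - p)‖ * (‖q‖ * M) := by gcongr
    _ = ‖q‖ * (2 * M * Z * ‖q * (q * z - p)‖) := by ring

lemma badlyApproximable_of_norm_zn_le (hΔ : Δ < 0) (hΔmod : Δ % 4 = 0 ∨ Δ % 4 = 1)
    (hB0 : (0 : ℂ) ∉ B) {M : ℝ} (hbM : ∀ n, ‖R.bn n‖ ≤ M) (hε0 : 0 ≤ ε) (hε1 : ε < 1)
    {Z : ℝ} (hZ : ∀ n, ‖R.zn n‖ ≤ Z) : BadlyApproximable Δ z := by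
  set V := M / (1 - ε ^ 2)
  have hM : 1 ≤ M := by simpa [bn_zero] using hbM 0
  have hV : 0 < V := div_pos (by linarith) (by nlinarith)
  have hZ0 : 0 < Z := (norm_pos_iff.2 (R.zn_succ_ne_zero hB0 0)).trans_le (hZ 1)
  refine ⟨min (4 * V)⁻¹ (2 * M * Z)⁻¹, by positivity, fun p q hp hq hq0 => ?_⟩
  have hq1 : 1 / 2 ≤ ‖q * R.θ 0‖ := by
    rw [θ_zero, mul_neg_one, norm_neg]
    linarith [one_le_norm_of_mem_O hΔ hΔmod hq hq0]
  obtain ⟨k, hk, hk'⟩ := exists_le_and_succ_lt (u := fun n => ‖q * R.θ n‖) hq1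
    (R.exists_norm_mul_θ_lt hB0 hε0 hε1 q one_half_pos)
  by_cases heq : q * R.pn (k + 1) = p * R.qn (k + 1)
  · exact (min_le_right _ _).trans
      (R.inv_le_norm_of_eq_convergent hΔ hΔmod hB0 hp hq hq0 (hbM _) (hZ _) hk heq)
  · exact (min_le_left _ _).trans (R.inv_le_norm_of_ne_convergent hΔ hΔmod hp hq
      (R.norm_qn_succ_mul_θ_le hB0 hbM hε0 hε1 k) hk hk' heq)

end Run

theorem stmt12_general (Δ : ℤ) (hΔneg : Δ < 0) (hΔmod : Δ % 4 = 0 ∨ Δ % 4 = 1)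
    (B : Set ℂ) (ε : ℝ) (hε0 : 0 < ε) (hε1 : ε < 1) (hadm : Admissible Δ B ε)
    (z : ℂ) (R : Run Δ B ε z ⊤) :
    BadlyApproximable Δ z ↔ ∃ C : ℝ, ∀ n : ℕ, 1 ≤ n → ‖R.a n‖ ≤ C := by
  obtain ⟨-, hfin, hBO, hB0, -⟩ := hadm
  have hb1 := R.one_le_norm_bn hΔneg hΔmod hBO hB0
  have hbM := R.norm_bn_le_mu hfin hb1
  have hbounded := R.exists_norm_an_le_iff hb1 hbM hε0.le
  exact ⟨fun hz => hbounded.2 (R.exists_norm_zn_le_of_badlyApproximable hΔneg hΔmod hB0 hbM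
      hε0.le hε1 hz),
    fun ha => (hbounded.1 ha).elim fun _ hZ =>
      R.badlyApproximable_of_norm_zn_le hΔneg hΔmod hB0 hbM hε0.le hε1 hZ⟩

theorem stmt12 (Δ : ℤ) (hΔneg : Δ < 0) (hΔmod : Δ % 4 = 0 ∨ Δ % 4 = 1)
    (B : Set ℂ) (ε : ℝ) (hε0 : 0 < ε) (hε1 : ε < 1) (hadm : Admissible Δ B ε)
    (hεμ : 2 / 3 ≤ ε * mu B)
    (z : ℂ) (R : Run Δ B ε z ⊤) :
    BadlyApproximable Δ z ↔ ∃ C : ℝ, ∀ n : ℕ, 1 ≤ n → ‖R.a n‖ ≤ C :=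
  stmt12_general Δ hΔneg hΔmod B ε hε0 hε1 hadm z R

end CFNE
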